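/- Let (A_i)_{i∈I} and (B_j)_{j∈J} be POVMs on a finite-dimensional complex Hilbert space H, each measured via its Lüders channel, and define the fidelity-based disturbances D_F(A;ψ) = 1 − Σ_i ⟨ψ, A_i^{1/2} ψ⟩² and D_F(B;ψ) = 1 − Σ_j ⟨ψ, B_j^{1/2} ψ⟩² for unit vectors ψ. Then the infimum over unit vectors ψ of (1/2)[D_F(A;ψ) + D_F(B;ψ)] equals 0 if and only if all the positive operators A_i and B_j have a common eigenvector, i.e. there exists a unit vector ψ and scalars λ_i, μ_j with A_i ψ = λ_i ψ for all i and B_j ψ = μ_j ψ for all j. -/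

import Mathlib

/-!
For a Hermitian `T` and a unit vector `ψ`, `‖Tψ - ⟨ψ, Tψ⟩ψ‖² = ⟨ψ, T²ψ⟩ - ⟨ψ, Tψ⟩²`. Applied to
`T = √Aᵢ` this gives `⟨ψ, √Aᵢ ψ⟩² ≤ ⟨ψ, Aᵢ ψ⟩`, with equality iff `ψ` is an eigenvector of `√Aᵢ`,
equivalently of `Aᵢ`. Since `∑ ⟨ψ, Aᵢ ψ⟩ = 1` for a POVM, each disturbance is nonnegative and
vanishes exactly at the vectors that are eigenvectors of every `Aᵢ`. The average disturbance is
continuous on the compact unit sphere, so its infimum is attained and is zero iff it vanishes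
somewhere.
-/

open Matrix
open scoped ComplexOrder

noncomputable def Matrix.PosSemidef.sqrt {n 𝕜 : Type*} [Fintype n] [RCLike 𝕜] [DecidableEq n]
    {A : Matrix n n 𝕜} (hA : A.PosSemidef) : Matrix n n 𝕜 :=
  hA.1.eigenvectorUnitary.1 * diagonal ((↑) ∘ (√·) ∘ hA.1.eigenvalues) *
  (star hA.1.eigenvectorUnitary : Matrix n n 𝕜)

namespace Matrix

variable {m 𝕜 : Type*} [Fintype m] [RCLike 𝕜]

lemma star_dotProduct_self_eq_norm_sq (v : m → 𝕜) :
    star v ⬝ᵥ v = (‖WithLp.toLp 2 v‖ : 𝕜) ^ 2 := by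
  rw [← inner_self_eq_norm_sq_to_K, EuclideanSpace.inner_toLp_toLp, dotProduct_comm]

lemma star_dotProduct_self_eq_one_iff (v : m → 𝕜) :
    star v ⬝ᵥ v = 1 ↔ ‖WithLp.toLp 2 v‖ = 1 := by
  rw [star_dotProduct_self_eq_norm_sq]
  norm_cast
  exact pow_eq_one_iff_of_nonneg (norm_nonneg _) two_ne_zero

lemma isCompact_setOf_star_dotProduct_self_eq_one :
    IsCompact {v : m → 𝕜 | star v ⬝ᵥ v = 1} := by
  have : {v : m → 𝕜 | star v ⬝ᵥ v = 1} =
      (PiLp.homeomorph 2 fun _ : m ↦ 𝕜).symm ⁻¹' Metric.sphere 0 1 := by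
    ext v
    simp only [Set.mem_ofPred_eq, Set.mem_preimage, mem_sphere_zero_iff_norm]
    exact star_dotProduct_self_eq_one_iff v
  rw [this]
  exact (PiLp.homeomorph 2 fun _ : m ↦ 𝕜).symm.isCompact_preimage.mpr (isCompact_sphere 0 1)

lemma IsHermitian.star_mulVec_dotProduct {T : Matrix m m 𝕜} (hT : T.IsHermitian) (v w : m → 𝕜) :
    star (T *ᵥ v) ⬝ᵥ w = star v ⬝ᵥ T *ᵥ w := by
  rw [star_mulVec, ← dotProduct_mulVec, hT.eq]

lemma IsHermitian.star_star_dotProduct_mulVec_self {T : Matrix m m 𝕜} (hT : T.IsHermitian)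
    (v : m → 𝕜) :
    star (star v ⬝ᵥ T *ᵥ v) = star v ⬝ᵥ T *ᵥ v := by
  rw [← star_dotProduct, hT.star_mulVec_dotProduct]

lemma IsHermitian.star_dotProduct_self_sub_smul {T : Matrix m m 𝕜} (hT : T.IsHermitian)
    {ψ : m → 𝕜} (hψ : star ψ ⬝ᵥ ψ = 1) :
    star (T *ᵥ ψ - (star ψ ⬝ᵥ T *ᵥ ψ) • ψ) ⬝ᵥ (T *ᵥ ψ - (star ψ ⬝ᵥ T *ᵥ ψ) • ψ)
      = star ψ ⬝ᵥ (T * T) *ᵥ ψ - (star ψ ⬝ᵥ T *ᵥ ψ) ^ 2 := by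
  simp only [star_sub, star_smul, sub_dotProduct, dotProduct_sub, smul_dotProduct, dotProduct_smul,
    smul_eq_mul, hT.star_mulVec_dotProduct, hT.star_star_dotProduct_mulVec_self, mulVec_mulVec, hψ]
  ring

variable [DecidableEq m]

lemma diagonal_ofReal_comp_mulVec_of_mulVec_eq_smul {d : m → ℝ} {φ : m → 𝕜} {c : 𝕜}
    (h : diagonal (RCLike.ofReal ∘ d) *ᵥ φ = c • φ) (f : ℝ → ℝ) :
    diagonal (RCLike.ofReal ∘ f ∘ d) *ᵥ φ = (f (RCLike.re c) : 𝕜) • φ := by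
  funext k
  have hk := congrFun h k
  simp only [mulVec_diagonal, Function.comp_apply, Pi.smul_apply, smul_eq_mul] at hk ⊢
  rcases eq_or_ne (φ k) 0 with hφ | hφ
  · simp [hφ]
  · rw [← mul_right_cancel₀ hφ hk, RCLike.ofReal_re]

lemma IsHermitian.cfc_mulVec_of_mulVec_eq_smul {A : Matrix m m 𝕜} (hA : A.IsHermitian)
    (f : ℝ → ℝ) {ψ : m → 𝕜} {c : 𝕜} (h : A *ᵥ ψ = c • ψ) :
    hA.cfc f *ᵥ ψ = (f (RCLike.re c) : 𝕜) • ψ := by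
  have hspec := hA.spectral_theorem
  rw [Unitary.conjStarAlgAut_apply] at hspec
  set U : Matrix m m 𝕜 := (hA.eigenvectorUnitary : Matrix m m 𝕜)
  have hUU : star U * U = 1 := Unitary.coe_star_mul_self _
  have hUU' : U * star U = 1 := Unitary.coe_mul_star_self _
  have hdiag : diagonal (RCLike.ofReal ∘ hA.eigenvalues) *ᵥ (star U *ᵥ ψ) = c • (star U *ᵥ ψ) := by
    rw [mulVec_mulVec, ← mulVec_smul, ← h, mulVec_mulVec]
    conv_rhs => rw [hspec]
    simp only [← Matrix.mul_assoc, hUU, Matrix.one_mul]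
  rw [IsHermitian.cfc, Unitary.conjStarAlgAut_apply, ← mulVec_mulVec, ← mulVec_mulVec,
    diagonal_ofReal_comp_mulVec_of_mulVec_eq_smul hdiag f, mulVec_smul, mulVec_mulVec, hUU',
    one_mulVec]

namespace PosSemidef

variable {A : Matrix m m 𝕜}

lemma sqrt_eq_cfc (hA : A.PosSemidef) : hA.sqrt = hA.1.cfc Real.sqrt := by
  rw [IsHermitian.cfc, Unitary.conjStarAlgAut_apply]
  rfl

lemma isHermitian_sqrt (hA : A.PosSemidef) : hA.sqrt.IsHermitian := by
  rw [sqrt_eq_cfc, ← hA.1.cfc_eq]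
  exact cfc_predicate _ _

lemma sqrt_mul_self (hA : A.PosSemidef) : hA.sqrt * hA.sqrt = A := by
  conv_rhs => rw [hA.1.spectral_theorem]
  rw [sqrt_eq_cfc, IsHermitian.cfc, ← map_mul, diagonal_mul_diagonal]
  congr 2
  funext i
  simp [← RCLike.ofReal_mul, Real.mul_self_sqrt (hA.eigenvalues_nonneg i)]

variable {ψ : m → 𝕜}

lemma re_dotProduct_mulVec_eq_sq_add_norm_sq (hA : A.PosSemidef) (hψ : star ψ ⬝ᵥ ψ = 1) :
    RCLike.re (star ψ ⬝ᵥ A *ᵥ ψ) = RCLike.re (star ψ ⬝ᵥ hA.sqrt *ᵥ ψ) ^ 2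
      + ‖WithLp.toLp 2 (hA.sqrt *ᵥ ψ - (star ψ ⬝ᵥ hA.sqrt *ᵥ ψ) • ψ)‖ ^ 2 := by
  have hvar := congrArg RCLike.re (hA.isHermitian_sqrt.star_dotProduct_self_sub_smul hψ)
  rw [hA.sqrt_mul_self, star_dotProduct_self_eq_norm_sq] at hvar
  simp only [RCLike.ofReal_re, RCLike.ofReal_im, map_sub, pow_two, RCLike.mul_re,
    hA.isHermitian_sqrt.im_star_dotProduct_mulVec_self, mul_zero, sub_zero] at hvar
  linarith

lemma sq_re_dotProduct_sqrt_mulVec_le (hA : A.PosSemidef) (hψ : star ψ ⬝ᵥ ψ = 1) :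
    RCLike.re (star ψ ⬝ᵥ hA.sqrt *ᵥ ψ) ^ 2 ≤ RCLike.re (star ψ ⬝ᵥ A *ᵥ ψ) := by
  rw [hA.re_dotProduct_mulVec_eq_sq_add_norm_sq hψ]
  exact le_add_of_nonneg_right (sq_nonneg _)

lemma sq_re_dotProduct_sqrt_mulVec_eq_iff (hA : A.PosSemidef) (hψ : star ψ ⬝ᵥ ψ = 1) :
    RCLike.re (star ψ ⬝ᵥ hA.sqrt *ᵥ ψ) ^ 2 = RCLike.re (star ψ ⬝ᵥ A *ᵥ ψ) ↔
      ∃ c : 𝕜, hA.sqrt *ᵥ ψ = c • ψ := by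
  rw [hA.re_dotProduct_mulVec_eq_sq_add_norm_sq hψ, left_eq_add, sq_eq_zero_iff, norm_eq_zero,
    WithLp.toLp_eq_zero, sub_eq_zero]
  refine ⟨fun h ↦ ⟨_, h⟩, ?_⟩
  rintro ⟨c, hc⟩
  rw [hc, dotProduct_smul, hψ, smul_eq_mul, mul_one]

lemma exists_sqrt_mulVec_eq_smul_iff (hA : A.PosSemidef) (ψ : m → 𝕜) :
    (∃ c : 𝕜, hA.sqrt *ᵥ ψ = c • ψ) ↔ ∃ c : 𝕜, A *ᵥ ψ = c • ψ := by
  constructor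
  · rintro ⟨c, hc⟩
    refine ⟨c ^ 2, ?_⟩
    rw [← hA.sqrt_mul_self, ← mulVec_mulVec, hc, mulVec_smul, hc, smul_smul, sq]
  · rintro ⟨c, hc⟩
    exact ⟨_, hA.sqrt_eq_cfc ▸ hA.1.cfc_mulVec_of_mulVec_eq_smul _ hc⟩

end PosSemidef

lemma sum_star_dotProduct_mulVec_of_sum_eq_one {I : Type*} [Fintype I] {A : I → Matrix m m 𝕜}
    (hsum : ∑ i, A i = 1) (ψ : m → 𝕜) :
    ∑ i, star ψ ⬝ᵥ A i *ᵥ ψ = star ψ ⬝ᵥ ψ := by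
  rw [← dotProduct_sum, ← sum_mulVec, hsum, one_mulVec]

end Matrix

section FidelityDisturbance

variable {m 𝕜 I : Type*} [Fintype m] [DecidableEq m] [RCLike 𝕜] [Fintype I]
  {A : I → Matrix m m 𝕜} {ψ : m → 𝕜}

/-- The fidelity-based disturbance `1 - F²(Φ_A(|ψ⟩⟨ψ|), |ψ⟩⟨ψ|)` of the Lüders channel `Φ_A`
of the POVM `A`. -/
noncomputable def fidelityDisturbance (hA : ∀ i, (A i).PosSemidef) (ψ : m → 𝕜) : ℝ :=
  1 - ∑ i, RCLike.re (star ψ ⬝ᵥ (hA i).sqrt *ᵥ ψ) ^ 2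

lemma continuous_fidelityDisturbance (hA : ∀ i, (A i).PosSemidef) :
    Continuous (fidelityDisturbance hA) := by
  unfold fidelityDisturbance
  fun_prop

lemma fidelityDisturbance_eq_sum (hA : ∀ i, (A i).PosSemidef) (hsum : ∑ i, A i = 1)
    (hψ : star ψ ⬝ᵥ ψ = 1) :
    fidelityDisturbance hA ψ = ∑ i, (RCLike.re (star ψ ⬝ᵥ A i *ᵥ ψ)
      - RCLike.re (star ψ ⬝ᵥ (hA i).sqrt *ᵥ ψ) ^ 2) := by
  rw [fidelityDisturbance, Finset.sum_sub_distrib, ← map_sum,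
    sum_star_dotProduct_mulVec_of_sum_eq_one hsum, hψ, RCLike.one_re]

lemma fidelityDisturbance_nonneg (hA : ∀ i, (A i).PosSemidef) (hsum : ∑ i, A i = 1)
    (hψ : star ψ ⬝ᵥ ψ = 1) : 0 ≤ fidelityDisturbance hA ψ := by
  rw [fidelityDisturbance_eq_sum hA hsum hψ]
  exact Finset.sum_nonneg fun i _ ↦ sub_nonneg.mpr ((hA i).sq_re_dotProduct_sqrt_mulVec_le hψ)

lemma fidelityDisturbance_eq_zero_iff (hA : ∀ i, (A i).PosSemidef) (hsum : ∑ i, A i = 1)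
    (hψ : star ψ ⬝ᵥ ψ = 1) :
    fidelityDisturbance hA ψ = 0 ↔ ∀ i, ∃ c : 𝕜, A i *ᵥ ψ = c • ψ := by
  rw [fidelityDisturbance_eq_sum hA hsum hψ, Finset.sum_eq_zero_iff_of_nonneg
    fun i _ ↦ sub_nonneg.mpr ((hA i).sq_re_dotProduct_sqrt_mulVec_le hψ)]
  simp only [Finset.mem_univ, forall_const, sub_eq_zero,
    eq_comm (a := RCLike.re (star ψ ⬝ᵥ A _ *ᵥ ψ)), (hA _).sq_re_dotProduct_sqrt_mulVec_eq_iff hψ,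
    (hA _).exists_sqrt_mulVec_eq_smul_iff]

end FidelityDisturbance

lemma IsCompact.sInf_image_eq_iff {α β : Type*} [TopologicalSpace α]
    [ConditionallyCompleteLinearOrder β] [TopologicalSpace β] [ClosedIicTopology β]
    {K : Set α} {f : α → β} {a : β} (hK : IsCompact K) (hne : K.Nonempty)
    (hf : ContinuousOn f K) (ha : ∀ x ∈ K, a ≤ f x) :
    sInf (f '' K) = a ↔ ∃ x ∈ K, f x = a := by
  constructor
  · rintro rfl
    exact (hK.image_of_continuousOn hf).sInf_mem (hne.image f)
  · rintro ⟨x, hx, rfl⟩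
    exact IsLeast.csInf_eq ⟨⟨x, hx, rfl⟩, by rintro _ ⟨y, hy, rfl⟩; exact ha y hy⟩

/-- For two POVMs `(A i)` and `(B j)` on a (nonzero)
finite-dimensional complex Hilbert space, each measured via its Lüders channel, with
fidelity-based disturbances `D_F(A;ψ) = 1 - ∑ i ⟨ψ, √(A i) ψ⟩²` (and likewise for
`B`), the infimum over unit vectors of the average disturbance vanishes iff all the
operators `A i` and `B j` have a common eigenvector. -/
theorem lueders_disturbance_tradeoff_zero_iff {n : ℕ} (hn : 0 < n)
    {I J : Type*} [Fintype I] [Fintype J]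
    (A : I → Matrix (Fin n) (Fin n) ℂ) (B : J → Matrix (Fin n) (Fin n) ℂ)
    (hA : ∀ i, (A i).PosSemidef) (hAsum : ∑ i, A i = 1)
    (hB : ∀ j, (B j).PosSemidef) (hBsum : ∑ j, B j = 1) :
    sInf {x : ℝ | ∃ ψ : Fin n → ℂ, star ψ ⬝ᵥ ψ = 1 ∧
        x = (1 / 2) * ((1 - ∑ i, ((star ψ ⬝ᵥ (hA i).sqrt *ᵥ ψ).re) ^ 2)
              + (1 - ∑ j, ((star ψ ⬝ᵥ (hB j).sqrt *ᵥ ψ).re) ^ 2))} = 0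
      ↔ ∃ ψ : Fin n → ℂ, star ψ ⬝ᵥ ψ = 1 ∧
          (∀ i, ∃ lam : ℂ, (A i) *ᵥ ψ = lam • ψ) ∧
          (∀ j, ∃ mu : ℂ, (B j) *ᵥ ψ = mu • ψ) := by
  set K := {ψ : Fin n → ℂ | star ψ ⬝ᵥ ψ = 1}
  have hS : {x : ℝ | ∃ ψ : Fin n → ℂ, star ψ ⬝ᵥ ψ = 1 ∧
        x = (1 / 2) * ((1 - ∑ i, ((star ψ ⬝ᵥ (hA i).sqrt *ᵥ ψ).re) ^ 2)
              + (1 - ∑ j, ((star ψ ⬝ᵥ (hB j).sqrt *ᵥ ψ).re) ^ 2))}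
      = (fun ψ ↦ (1 / 2) * (fidelityDisturbance hA ψ + fidelityDisturbance hB ψ)) '' K := by
    ext x
    constructor <;> rintro ⟨ψ, hψ, rfl⟩ <;> exact ⟨ψ, hψ, rfl⟩
  have hne : K.Nonempty := ⟨Pi.single ⟨0, hn⟩ 1, by simp [K]⟩
  have hnonneg : ∀ ψ ∈ K, 0 ≤ fidelityDisturbance hA ψ ∧ 0 ≤ fidelityDisturbance hB ψ :=
    fun ψ hψ ↦ ⟨fidelityDisturbance_nonneg hA hAsum hψ, fidelityDisturbance_nonneg hB hBsum hψ⟩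
  have hcont :
      Continuous fun ψ ↦ (1 / 2) * (fidelityDisturbance hA ψ + fidelityDisturbance hB ψ) :=
    ((continuous_fidelityDisturbance hA).add (continuous_fidelityDisturbance hB)).const_mul _
  rw [hS, isCompact_setOf_star_dotProduct_self_eq_one.sInf_image_eq_iff hne hcont.continuousOn
    fun ψ hψ ↦ mul_nonneg one_half_pos.le (add_nonneg (hnonneg ψ hψ).1 (hnonneg ψ hψ).2)]
  refine exists_congr fun ψ ↦ and_congr_right fun hψ ↦ ?_
  rw [mul_eq_zero, or_iff_right one_half_pos.ne', add_eq_zero_iff_of_nonneg (hnonneg ψ hψ).1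
    (hnonneg ψ hψ).2, fidelityDisturbance_eq_zero_iff hA hAsum hψ,
    fidelityDisturbance_eq_zero_iff hB hBsum hψ]
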